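/- arXiv:math/0411126 — 2 statements merged into one kernel-verified Lean document; each statement's English description precedes it below -/
import Mathlib

section
/- Let Λ' = ℚ[t,t⁻¹] with involution t ↦ t⁻¹, and let M = P ⊕ Q where P = Λ'/(t−2) and Q = Λ'/(2t−1). Let B : M × M → ℚ(t)/Λ' be any nondegenerate sesquilinear pairing (i.e., x ↦ B(x,·) is injective). Then M has exactly two self-annihilating submodules with respect to B, namely P and Q. -/
open LaurentPolynomial

noncomputable abbrev Lam : Type := LaurentPolynomial ℚ

noncomputable abbrev Pmod : Type := Lam ⧸ Ideal.span {(T 1 : Lam) - 2}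

noncomputable abbrev Qmod : Type := Lam ⧸ Ideal.span {2 * (T 1 : Lam) - 1}

noncomputable abbrev QLam : Type :=
  (FractionRing Lam) ⧸ LinearMap.range (Algebra.linearMap Lam (FractionRing Lam))

/-! ### Auxiliary material -/

set_option maxHeartbeats 1000000
set_option synthInstance.maxHeartbeats 400000

noncomputable def evalAt (u : ℚˣ) : Lam →ₐ[ℚ] ℚ :=
  AddMonoidAlgebra.lift ℚ ℚ ℤ ((Units.coeHom ℚ).comp (zpowersHom ℚˣ u))

lemma evalAt_T (u : ℚˣ) (n : ℤ) : evalAt u (T n) = (u : ℚ) ^ n := by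
  show AddMonoidAlgebra.lift ℚ ℚ ℤ _ (T n) = _
  have : (T n : Lam) = AddMonoidAlgebra.single n 1 := rfl
  rw [this, AddMonoidAlgebra.lift_single]
  simp [zpowersHom_apply]

lemma one_notin_P : (1 : Lam) ∉ Ideal.span {(T 1 : Lam) - 2} := by
  rw [Ideal.mem_span_singleton]
  rintro ⟨f, hf⟩
  have := congrArg (evalAt (Units.mk0 2 (by norm_num))) hf
  rw [map_one, map_mul, map_sub, evalAt_T, map_ofNat] at this
  norm_num at this

lemma one_notin_Q : (1 : Lam) ∉ Ideal.span {2 * (T 1 : Lam) - 1} := by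
  rw [Ideal.mem_span_singleton]
  rintro ⟨f, hf⟩
  have := congrArg (evalAt (Units.mk0 (1/2) (by norm_num))) hf
  rw [map_one, map_mul, map_sub, map_mul, evalAt_T, map_ofNat, map_one] at this
  norm_num at this

lemma C_half_mul_two : (C (1/2 : ℚ) : Lam) * 2 = 1 := by
  rw [show (2 : Lam) = C 2 from (map_ofNat C 2).symm, ← map_mul]
  norm_num

lemma smul_mk (I : Ideal Lam) (r f : Lam) :
    r • (Ideal.Quotient.mk I f) = Ideal.Quotient.mk I (r * f) := by
  rw [← Ideal.Quotient.mk_eq_mk, ← Submodule.Quotient.mk_smul, smul_eq_mul]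
  rfl

lemma smul_mkC (I : Ideal Lam) (c c' : ℚ) :
    (C c : Lam) • Ideal.Quotient.mk I (C c') = Ideal.Quotient.mk I (C (c * c')) := by
  rw [smul_mk, ← map_mul]

lemma surj_aux (I : Ideal Lam) (e e' : ℚ)
    (he : Ideal.Quotient.mk I (T 1) = Ideal.Quotient.mk I (C e)) (hee' : e * e' = 1) :
    ∀ x : Lam ⧸ I, ∃ c : ℚ, x = Ideal.Quotient.mk I (C c) := by
  have hCmul : ∀ a b : ℚ, Ideal.Quotient.mk I (C a) * Ideal.Quotient.mk I (C b)
      = Ideal.Quotient.mk I (C (a * b)) := by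
    intro a b; rw [← map_mul, ← map_mul]
  have hTinv : Ideal.Quotient.mk I (T (-1)) = Ideal.Quotient.mk I (C e') := by
    have h1 : Ideal.Quotient.mk I (T (-1)) * Ideal.Quotient.mk I (T 1) = 1 := by
      rw [← map_mul, ← T_add]
      norm_num
    calc Ideal.Quotient.mk I (T (-1))
        = Ideal.Quotient.mk I (T (-1)) * (Ideal.Quotient.mk I (C e) * Ideal.Quotient.mk I (C e')) := by
          rw [hCmul, hee']
          simp
      _ = (Ideal.Quotient.mk I (T (-1)) * Ideal.Quotient.mk I (T 1)) * Ideal.Quotient.mk I (C e') := by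
          rw [he]; ring
      _ = Ideal.Quotient.mk I (C e') := by rw [h1, one_mul]
  have hT : ∀ n : ℤ, ∃ c : ℚ, Ideal.Quotient.mk I (T n) = Ideal.Quotient.mk I (C c) := by
    intro n
    induction n using Int.induction_on with
    | zero => exact ⟨1, by simp [T_zero]⟩
    | succ k ih =>
        obtain ⟨c, hc⟩ := ih
        refine ⟨c * e, ?_⟩
        rw [T_add, map_mul, hc, he, hCmul]
    | pred k ih =>
        obtain ⟨c, hc⟩ := ih
        refine ⟨c * e', ?_⟩
        have h : ((-k : ℤ) - 1) = (-k) + (-1) := by ring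
        rw [h, T_add, map_mul, hc, hTinv, hCmul]
  intro x
  obtain ⟨f, rfl⟩ := Ideal.Quotient.mk_surjective x
  induction f using LaurentPolynomial.induction_on' with
  | add p q hp hq =>
      obtain ⟨c1, hc1⟩ := hp
      obtain ⟨c2, hc2⟩ := hq
      exact ⟨c1 + c2, by rw [map_add, hc1, hc2, ← map_add, ← map_add]⟩
  | C_mul_T n a =>
      obtain ⟨c, hc⟩ := hT n
      exact ⟨a * c, by rw [map_mul, hc, hCmul]⟩

/-- `T 1 = C 2` in `Pmod`. -/
lemma hPT : Ideal.Quotient.mk (Ideal.span {(T 1 : Lam) - 2}) (T 1)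
    = Ideal.Quotient.mk _ (C 2) := by
  rw [Ideal.Quotient.mk_eq_mk_iff_sub_mem]
  rw [show (T 1 : Lam) - C 2 = T 1 - 2 by rw [map_ofNat]]
  exact Ideal.subset_span rfl

/-- `T 1 = C (1/2)` in `Qmod`. -/
lemma hQT : Ideal.Quotient.mk (Ideal.span {2 * (T 1 : Lam) - 1}) (T 1)
    = Ideal.Quotient.mk _ (C (1/2)) := by
  rw [Ideal.Quotient.mk_eq_mk_iff_sub_mem]
  rw [show (T 1 : Lam) - C (1/2) = C (1/2) * (2 * T 1 - 1) by
    linear_combination (-(T 1 : Lam)) * C_half_mul_two]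
  exact Ideal.mul_mem_left _ _ (Ideal.subset_span rfl)

lemma surjP : ∀ x : Pmod, ∃ c : ℚ, x = Ideal.Quotient.mk _ (C c) :=
  surj_aux _ 2 (1/2) hPT (by norm_num)

lemma surjQ : ∀ x : Qmod, ∃ c : ℚ, x = Ideal.Quotient.mk _ (C c) :=
  surj_aux _ (1/2) 2 hQT (by norm_num)

lemma nontrivP : (1 : Pmod) ≠ 0 := by
  intro h
  rw [show (1 : Pmod) = Ideal.Quotient.mk _ (1 : Lam) from rfl,
    Ideal.Quotient.eq_zero_iff_mem] at h
  exact one_notin_P h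

lemma mkC_injP {c : ℚ} (h : (Ideal.Quotient.mk (Ideal.span {(T 1 : Lam) - 2}) (C c) : Pmod) = 0) :
    c = 0 := by
  by_contra hc
  apply nontrivP
  have h2 := congrArg (fun x : Pmod => (C c⁻¹ : Lam) • x) h
  simp only [smul_zero] at h2
  rw [smul_mk, ← map_mul, inv_mul_cancel₀ hc, map_one] at h2
  exact h2

lemma mkC_injQ {c : ℚ}
    (h : (Ideal.Quotient.mk (Ideal.span {2 * (T 1 : Lam) - 1}) (C c) : Qmod) = 0) : c = 0 := by
  by_contra hc
  have h1 : (1 : Qmod) = 0 := by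
    have h2 := congrArg (fun x : Qmod => (C c⁻¹ : Lam) • x) h
    simp only [smul_zero] at h2
    rw [smul_mk, ← map_mul, inv_mul_cancel₀ hc, map_one] at h2
    exact h2
  rw [show (1 : Qmod) = Ideal.Quotient.mk _ (1 : Lam) from rfl,
    Ideal.Quotient.eq_zero_iff_mem] at h1
  exact one_notin_Q h1

lemma annP (p : Pmod) : ((T 1 : Lam) - 2) • p = 0 := by
  obtain ⟨f, rfl⟩ := Ideal.Quotient.mk_surjective p
  rw [smul_mk, Ideal.Quotient.eq_zero_iff_mem]
  exact Ideal.mul_mem_right _ _ (Ideal.subset_span rfl)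

lemma annQ (q : Qmod) : (2 * (T 1 : Lam) - 1) • q = 0 := by
  obtain ⟨f, rfl⟩ := Ideal.Quotient.mk_surjective q
  rw [smul_mk, Ideal.Quotient.eq_zero_iff_mem]
  exact Ideal.mul_mem_right _ _ (Ideal.subset_span rfl)

lemma smulTP (p : Pmod) : (T 1 : Lam) • p = (C (2:ℚ) : Lam) • p := by
  obtain ⟨f, rfl⟩ := Ideal.Quotient.mk_surjective p
  rw [smul_mk, smul_mk, Ideal.Quotient.mk_eq_mk_iff_sub_mem]
  rw [show (T 1 : Lam) * f - C 2 * f = f * (T 1 - 2) by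
    rw [show (C (2:ℚ) : Lam) = 2 from map_ofNat C 2]; ring]
  exact Ideal.mul_mem_left _ _ (Ideal.subset_span rfl)

lemma smulTQ (q : Qmod) : (T 1 : Lam) • q = (C (1/2 : ℚ) : Lam) • q := by
  obtain ⟨f, rfl⟩ := Ideal.Quotient.mk_surjective q
  rw [smul_mk, smul_mk, Ideal.Quotient.mk_eq_mk_iff_sub_mem]
  rw [show (T 1 : Lam) * f - C (1/2) * f = (C (1/2) * f) * (2 * T 1 - 1) by
    linear_combination (-(T 1 : Lam)) * f * C_half_mul_two]
  exact Ideal.mul_mem_left _ _ (Ideal.subset_span rfl)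

theorem exactly_two_self_annihilating_submodules
    (σ : Lam →ₐ[ℚ] Lam) (hσ : σ (T 1) = T (-1)) (hinv : ∀ r : Lam, σ (σ r) = r)
    (B : Pmod × Qmod → Pmod × Qmod → QLam)
    (haddl : ∀ x y z, B (x + y) z = B x z + B y z)
    (haddr : ∀ x y z, B x (y + z) = B x y + B x z)
    (hsmull : ∀ (r : Lam) x y, B (r • x) y = r • B x y)
    (hsmulr : ∀ (r : Lam) x y, B x (r • y) = σ r • B x y)
    (hnondeg : ∀ x, (∀ y, B x y = 0) → x = 0) :
    ∀ K : Submodule Lam (Pmod × Qmod),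
      (∀ x, x ∈ K ↔ ∀ k ∈ K, B x k = 0) ↔
        (K = Submodule.prod ⊤ ⊥ ∨ K = Submodule.prod ⊥ ⊤) := by
  -- basic bilinearity consequences
  have hB0l : ∀ y, B 0 y = 0 := by
    intro y
    have h := haddl 0 0 y
    rw [add_zero] at h
    exact (right_eq_add.mp h)
  have hB0r : ∀ x, B x 0 = 0 := by
    intro x
    have h := haddr x 0 0
    rw [add_zero] at h
    exact (right_eq_add.mp h)
  have hsubl : ∀ x y z, B (x - y) z = B x z - B y z := by
    intro x y z
    have h := haddl (x - y) y z
    rw [sub_add_cancel] at h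
    rw [eq_sub_iff_add_eq, ← h]
  -- kill a QLam element annihilated by a nonzero rational scalar
  have kill : ∀ (m : QLam) (c : ℚ), c ≠ 0 → (C c : Lam) • m = 0 → m = 0 := by
    intro m c hc h
    have h2 : (C c⁻¹ : Lam) • ((C c : Lam) • m) = 0 := by rw [h, smul_zero]
    rw [← mul_smul, show (C c⁻¹ : Lam) * C c = 1 by
      rw [← map_mul, inv_mul_cancel₀ hc, map_one], one_smul] at h2
    exact h2
  -- vanishing lemmas
  have hTT : (T 1 : Lam) * T (-1) = 1 := by
    rw [← T_add]; norm_num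
  have hσP : σ ((T 1 : Lam) - 2) = T (-1) - 2 := by
    rw [map_sub, hσ, map_ofNat]
  have hσQ : σ (2 * (T 1 : Lam) - 1) = 2 * T (-1) - 1 := by
    rw [map_sub, map_mul, hσ, map_ofNat, map_one]
  have annPP : ∀ x : Pmod × Qmod, x.2 = 0 → ((T 1 : Lam) - 2) • x = 0 := by
    intro x hx2
    have h : ((T 1 : Lam) - 2) • x = (((T 1 : Lam) - 2) • x.1, ((T 1 : Lam) - 2) • x.2) := rfl
    rw [h, annP, hx2, smul_zero]
    rfl
  have annQQ : ∀ x : Pmod × Qmod, x.1 = 0 → (2 * (T 1 : Lam) - 1) • x = 0 := by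
    intro x hx1
    have h : (2 * (T 1 : Lam) - 1) • x
        = ((2 * (T 1 : Lam) - 1) • x.1, (2 * (T 1 : Lam) - 1) • x.2) := rfl
    rw [h, annQ, hx1, smul_zero]
    rfl
  have vanishPP : ∀ p p' : Pmod, B (p, (0:Qmod)) (p', (0:Qmod)) = 0 := by
    intro p p'
    set m := B (p, (0:Qmod)) (p', (0:Qmod)) with hm
    have hL : ((T 1 : Lam) - 2) • m = 0 := by
      rw [hm, ← hsmull, annPP (p, (0:Qmod)) rfl, hB0l]
    have hR : ((T (-1) : Lam) - 2) • m = 0 := by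
      rw [hm, ← hσP, ← hsmulr, annPP (p', (0:Qmod)) rfl, hB0r]
    have hb : (T 1 : Lam) * (T (-1) - 2) + 2 * (T 1 - 2) = -3 := by
      linear_combination hTT
    have h3 : (-3 : Lam) • m = 0 := by
      calc (-3 : Lam) • m = ((T 1 : Lam) * (T (-1) - 2) + 2 * (T 1 - 2)) • m := by rw [hb]
        _ = (T 1 : Lam) • (((T (-1) : Lam) - 2) • m) + (2 : Lam) • (((T 1 : Lam) - 2) • m) := by
            rw [add_smul, mul_smul, mul_smul]
        _ = 0 := by rw [hL, hR, smul_zero, smul_zero, add_zero]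
    exact kill m (-3) (by norm_num)
      (by rw [show (C (-3 : ℚ) : Lam) = -3 by rw [map_neg, map_ofNat]]; exact h3)
  have vanishQQ : ∀ q q' : Qmod, B ((0:Pmod), q) ((0:Pmod), q') = 0 := by
    intro q q'
    set m := B ((0:Pmod), q) ((0:Pmod), q') with hm
    have hL : (2 * (T 1 : Lam) - 1) • m = 0 := by
      rw [hm, ← hsmull, annQQ ((0:Pmod), q) rfl, hB0l]
    have hR : (2 * (T (-1) : Lam) - 1) • m = 0 := by
      rw [hm, ← hσQ, ← hsmulr, annQQ ((0:Pmod), q') rfl, hB0r]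
    have hb : 2 * ((T 1 : Lam) * (2 * T (-1) - 1)) + (2 * T 1 - 1) = 3 := by
      linear_combination (4 : Lam) * hTT
    have h3 : (3 : Lam) • m = 0 := by
      calc (3 : Lam) • m = (2 * ((T 1 : Lam) * (2 * T (-1) - 1)) + (2 * T 1 - 1)) • m := by
            rw [hb]
        _ = (2 : Lam) • ((T 1 : Lam) • ((2 * (T (-1) : Lam) - 1) • m))
              + (2 * (T 1 : Lam) - 1) • m := by
            rw [add_smul, mul_smul, mul_smul]
        _ = 0 := by rw [hL, hR, smul_zero, smul_zero, add_zero]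
    exact kill m 3 (by norm_num)
      (by rw [show (C (3 : ℚ) : Lam) = 3 by rw [map_ofNat]]; exact h3)
  -- splitting of elements of submodules
  have hsplit : ∀ (K : Submodule Lam (Pmod × Qmod)) x, x ∈ K →
      ((x.1, (0:Qmod)) ∈ K ∧ ((0:Pmod), x.2) ∈ K) := by
    intro K x hx
    have h1 : (T 1 : Lam) • x - (C (1/2 : ℚ) : Lam) • x ∈ K :=
      K.sub_mem (K.smul_mem _ hx) (K.smul_mem _ hx)
    have h2 : (T 1 : Lam) • x - (C (1/2 : ℚ) : Lam) • x = ((C (3/2 : ℚ) : Lam) • x.1, (0:Qmod)) := by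
      have e1 : (T 1 : Lam) • x = ((T 1 : Lam) • x.1, (T 1 : Lam) • x.2) := rfl
      have e2 : (C (1/2 : ℚ) : Lam) • x = ((C (1/2 : ℚ) : Lam) • x.1, (C (1/2 : ℚ) : Lam) • x.2) := rfl
      rw [e1, e2, smulTP, smulTQ, Prod.mk_sub_mk, sub_self, ← sub_smul, ← map_sub]
      norm_num
    rw [h2] at h1
    have e : (C (2/3 : ℚ) : Lam) * C (3/2 : ℚ) = 1 := by
      rw [← map_mul]; norm_num
    have h4 : (C (2/3 : ℚ) : Lam) • ((C (3/2 : ℚ) : Lam) • x.1, (0:Qmod)) = (x.1, (0:Qmod)) := by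
      rw [Prod.smul_mk, smul_zero, ← mul_smul, e, one_smul]
    have h5 : (x.1, (0:Qmod)) ∈ K := by
      rw [← h4]; exact K.smul_mem _ h1
    refine ⟨h5, ?_⟩
    have h6 : ((0:Pmod), x.2) = x - (x.1, (0:Qmod)) := by
      simp [Prod.ext_iff]
    rw [h6]
    exact K.sub_mem hx h5
  -- fullness
  have hfullP : ∀ (K : Submodule Lam (Pmod × Qmod)) (p : Pmod), p ≠ 0 → (p, (0:Qmod)) ∈ K →
      ∀ p' : Pmod, (p', (0:Qmod)) ∈ K := by
    intro K p hp hpK p'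
    obtain ⟨c, rfl⟩ := surjP p
    obtain ⟨c', rfl⟩ := surjP p'
    have hc : c ≠ 0 := by
      intro h
      exact hp (by rw [h, map_zero, map_zero])
    have h4 : (C (c'/c) : Lam) • ((Ideal.Quotient.mk _ (C c) : Pmod), (0:Qmod))
        = ((Ideal.Quotient.mk _ (C c') : Pmod), (0:Qmod)) := by
      rw [Prod.smul_mk, smul_zero, smul_mkC, div_mul_cancel₀ _ hc]
    rw [← h4]
    exact K.smul_mem _ hpK
  have hfullQ : ∀ (K : Submodule Lam (Pmod × Qmod)) (q : Qmod), q ≠ 0 → ((0:Pmod), q) ∈ K →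
      ∀ q' : Qmod, ((0:Pmod), q') ∈ K := by
    intro K q hq hqK q'
    obtain ⟨c, rfl⟩ := surjQ q
    obtain ⟨c', rfl⟩ := surjQ q'
    have hc : c ≠ 0 := by
      intro h
      exact hq (by rw [h, map_zero, map_zero])
    have h4 : (C (c'/c) : Lam) • ((0:Pmod), (Ideal.Quotient.mk _ (C c) : Qmod))
        = ((0:Pmod), (Ideal.Quotient.mk _ (C c') : Qmod)) := by
      rw [Prod.smul_mk, smul_zero, smul_mkC, div_mul_cancel₀ _ hc]
    rw [← h4]
    exact K.smul_mem _ hqK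
  -- classification of submodules
  have classify : ∀ K : Submodule Lam (Pmod × Qmod),
      K = ⊥ ∨ K = Submodule.prod ⊤ ⊥ ∨ K = Submodule.prod ⊥ ⊤ ∨ K = ⊤ := by
    intro K
    by_cases hA : ∃ p : Pmod, p ≠ 0 ∧ (p, (0:Qmod)) ∈ K
    · by_cases hB : ∃ q : Qmod, q ≠ 0 ∧ ((0:Pmod), q) ∈ K
      · right; right; right
        rw [eq_top_iff]
        intro x _
        obtain ⟨p, hp, hpK⟩ := hA
        obtain ⟨q, hq, hqK⟩ := hB
        have h1 := hfullP K p hp hpK x.1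
        have h2 := hfullQ K q hq hqK x.2
        have hx : x = (x.1, (0:Qmod)) + ((0:Pmod), x.2) := by
          simp [Prod.ext_iff]
        rw [hx]
        exact K.add_mem h1 h2
      · right; left
        ext x
        rw [Submodule.mem_prod]
        constructor
        · intro hx
          refine ⟨trivial, ?_⟩
          rw [Submodule.mem_bot]
          by_contra hq
          exact hB ⟨x.2, hq, (hsplit K x hx).2⟩
        · rintro ⟨-, hx2⟩
          rw [Submodule.mem_bot] at hx2
          obtain ⟨p, hp, hpK⟩ := hA
          have h1 := hfullP K p hp hpK x.1
          have hx : x = (x.1, (0:Qmod)) := by rw [← hx2]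
          rw [hx]
          exact h1
    · by_cases hB : ∃ q : Qmod, q ≠ 0 ∧ ((0:Pmod), q) ∈ K
      · right; right; left
        ext x
        rw [Submodule.mem_prod]
        constructor
        · intro hx
          refine ⟨?_, trivial⟩
          rw [Submodule.mem_bot]
          by_contra hp
          exact hA ⟨x.1, hp, (hsplit K x hx).1⟩
        · rintro ⟨hx1, -⟩
          rw [Submodule.mem_bot] at hx1
          obtain ⟨q, hq, hqK⟩ := hB
          have h1 := hfullQ K q hq hqK x.2
          have hx : x = ((0:Pmod), x.2) := by rw [← hx1]
          rw [hx]
          exact h1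
      · left
        rw [eq_bot_iff]
        intro x hx
        have hx1 : x.1 = 0 := by
          by_contra h
          exact hA ⟨x.1, h, (hsplit K x hx).1⟩
        have hx2 : x.2 = 0 := by
          by_contra h
          exact hB ⟨x.2, h, (hsplit K x hx).2⟩
        rw [Submodule.mem_bot, Prod.ext_iff]
        exact ⟨hx1, hx2⟩
  -- main argument
  intro K
  constructor
  · intro hK
    rcases classify K with rfl | h | h | rfl
    · exfalso
      have h1 : ((1:Pmod), (0:Qmod)) ∈ (⊥ : Submodule Lam (Pmod × Qmod)) := by
        rw [hK]
        intro k hk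
        rw [Submodule.mem_bot] at hk
        rw [hk]
        exact hB0r _
      rw [Submodule.mem_bot, Prod.ext_iff] at h1
      exact nontrivP h1.1
    · exact Or.inl h
    · exact Or.inr h
    · exfalso
      have h1 : ((1:Pmod), (0:Qmod)) = 0 := by
        apply hnondeg
        intro y
        exact (hK _).mp trivial y trivial
      rw [Prod.ext_iff] at h1
      exact nontrivP h1.1
  · rintro (rfl | rfl) <;> intro x
    · constructor
      · intro hx k hk
        rw [Submodule.mem_prod, Submodule.mem_bot] at hx hk
        have hx' : x = (x.1, (0:Qmod)) := by rw [← hx.2]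
        have hk' : k = (k.1, (0:Qmod)) := by rw [← hk.2]
        rw [hx', hk']
        exact vanishPP _ _
      · intro h
        have hz : ((0:Pmod), x.2) = 0 := by
          apply hnondeg
          intro y
          have hy : y = (y.1, (0:Qmod)) + ((0:Pmod), y.2) := by simp [Prod.ext_iff]
          rw [hy, haddr]
          have e1 : B ((0:Pmod), x.2) (y.1, (0:Qmod)) = 0 := by
            have hx' : ((0:Pmod), x.2) = x - (x.1, (0:Qmod)) := by simp [Prod.ext_iff]
            rw [hx', hsubl, h (y.1, (0:Qmod)) (by simp [Submodule.mem_prod]),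
              vanishPP, sub_zero]
          rw [e1, vanishQQ, add_zero]
        rw [Submodule.mem_prod, Submodule.mem_bot]
        rw [Prod.ext_iff] at hz
        exact ⟨trivial, hz.2⟩
    · constructor
      · intro hx k hk
        rw [Submodule.mem_prod, Submodule.mem_bot] at hx hk
        have hx' : x = ((0:Pmod), x.2) := by rw [← hx.1]
        have hk' : k = ((0:Pmod), k.2) := by rw [← hk.1]
        rw [hx', hk']
        exact vanishQQ _ _
      · intro h
        have hz : (x.1, (0:Qmod)) = 0 := by
          apply hnondeg
          intro y
          have hy : y = (y.1, (0:Qmod)) + ((0:Pmod), y.2) := by simp [Prod.ext_iff]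
          rw [hy, haddr]
          have e1 : B (x.1, (0:Qmod)) ((0:Pmod), y.2) = 0 := by
            have hx' : (x.1, (0:Qmod)) = x - ((0:Pmod), x.2) := by simp [Prod.ext_iff]
            rw [hx', hsubl, h ((0:Pmod), y.2) (by simp [Submodule.mem_prod]),
              vanishQQ, sub_zero]
          rw [e1, vanishPP, zero_add]
        rw [Submodule.mem_prod, Submodule.mem_bot]
        rw [Prod.ext_iff] at hz
        exact ⟨hz.1, trivial⟩
end

section
/- Let B and C be g×g integer matrices and A = [[0,B],[C,0]] the 2g×2g block matrix. Set f(t) = det(tB − Cᵀ) ∈ ℤ[t]. Then in ℤ[t, t⁻¹] one has det(tA − Aᵀ) = t^g · f(t) · f(t⁻¹). In particular, the Alexander polynomial of a knot admitting a hyperbolic Seifert matrix factors up to a unit of ℤ[t,t⁻¹] as f(t)·f(t⁻¹). -/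
open Matrix

section Aux
variable {n : Type*} [DecidableEq n] [Fintype n] {R : Type*} [CommRing R]

lemma det_antidiag_J :
    (fromBlocks (0 : Matrix n n R) (1 : Matrix n n R) (1 : Matrix n n R)
      (0 : Matrix n n R)).det = (-1 : R) ^ Fintype.card n := by
  have h : (fromBlocks (1 : Matrix n n R) (0 : Matrix n n R) (1 : Matrix n n R)
        (1 : Matrix n n R)) * fromBlocks 0 1 1 0 *
      fromBlocks 1 0 (-1) 1 = fromBlocks (-1) (1 : Matrix n n R) 0 1 := by
    simp [fromBlocks_multiply]
  have := congrArg Matrix.det h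
  simp only [det_mul, det_fromBlocks_zero₁₂, det_fromBlocks_zero₂₁, det_one, one_mul, mul_one,
    det_neg, det_one] at this
  simpa using this

lemma det_fromBlocks_anti (M N : Matrix n n R) :
    (fromBlocks 0 M N 0).det = (-1 : R) ^ Fintype.card n * (N.det * M.det) := by
  have h : fromBlocks 0 M N 0 =
      fromBlocks (0 : Matrix n n R) 1 1 0 * fromBlocks N 0 0 M := by
    simp [fromBlocks_multiply]
  rw [h, det_mul, det_antidiag_J, det_fromBlocks_zero₂₁]
end Aux

open Polynomial Matrix LaurentPolynomial in
theorem alexander_polynomial_of_hyperbolic_seifert_matrix_factors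
    (g : ℕ) (B C : Matrix (Fin g) (Fin g) ℤ) :
    let A : Matrix (Fin g ⊕ Fin g) (Fin g ⊕ Fin g) ℤ := Matrix.fromBlocks 0 B C 0
    let L := LaurentPolynomial ℤ
    let AL : Matrix (Fin g ⊕ Fin g) (Fin g ⊕ Fin g) L := A.map (Int.cast)
    let f : ℤ[X] :=
      ((X : ℤ[X]) • B.map Polynomial.C - (C.map Polynomial.C).transpose).det
    ((T 1 : L) • AL - AL.transpose).det =
      (T (g : ℤ) : L) * Polynomial.aeval (T 1 : L) f * Polynomial.aeval (T (-1) : L) f := by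
  intro A L AL f
  set Bc : Matrix (Fin g) (Fin g) L := B.map Int.cast with hBc
  set Cc : Matrix (Fin g) (Fin g) L := C.map Int.cast with hCc
  have hA : (T 1 : L) • AL - AL.transpose =
      fromBlocks 0 ((T 1 : L) • Bc - Cc.transpose) ((T 1 : L) • Cc - Bc.transpose) 0 := by
    ext (i | i) (j | j) <;>
      simp [AL, A, Bc, Cc, Matrix.sub_apply, Matrix.smul_apply, Matrix.map_apply]
  have haeval : ∀ x : L, Polynomial.aeval x f = (x • Bc - Cc.transpose).det := by
    intro x
    have := RingHom.map_det ((Polynomial.aeval x : ℤ[X] →ₐ[ℤ] L) : ℤ[X] →+* L)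
      ((X : ℤ[X]) • B.map Polynomial.C - (C.map Polynomial.C).transpose)
    rw [show Polynomial.aeval x f = ((Polynomial.aeval x : ℤ[X] →ₐ[ℤ] L) : ℤ[X] →+* L) f from rfl, this]
    congr 1
    ext i j
    simp [Bc, Cc, Matrix.map_apply, Matrix.sub_apply, Matrix.smul_apply, Matrix.transpose_apply]
  have h3 : (T (g : ℤ) : L) * Polynomial.aeval (T (-1) : L) f =
      (Bc - (T 1 : L) • Cc.transpose).det := by
    rw [haeval]
    have e1 : (T 1 : L) • ((T (-1) : L) • Bc - Cc.transpose) =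
        Bc - (T 1 : L) • Cc.transpose := by
      rw [smul_sub, smul_smul, ← T_add]
      norm_num
    rw [← e1, Matrix.det_smul]
    congr 1
    rw [T_pow]
    norm_num
  have h4 : ((T 1 : L) • Cc - Bc.transpose).det =
      (-1 : L) ^ g * (Bc - (T 1 : L) • Cc.transpose).det := by
    have e2 : (T 1 : L) • Cc - Bc.transpose = -((Bc - (T 1 : L) • Cc.transpose).transpose) := by
      ext i j : 1
      simp only [Matrix.sub_apply, Matrix.smul_apply, Matrix.neg_apply, Matrix.transpose_apply,
        smul_eq_mul]
      ring
    rw [e2, Matrix.det_neg, Matrix.det_transpose]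
    simp
  rw [hA, det_fromBlocks_anti, h4, ← h3, ← haeval]
  simp only [Fintype.card_fin]
  ring_nf
  rw [← mul_assoc, ← mul_assoc, ← pow_add, ← two_mul, pow_mul, neg_one_sq, one_pow, one_mul]
end
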